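/- arXiv:2307.10974 — 3 statements merged into one kernel-verified Lean document; each statement's English description precedes it below -/
import Mathlib

section
/- Let N ≥ 1 and let V_{th,1} > V_{th,2} > ... > V_{th,N} > 0 be real thresholds such that the set of subset sums {Σ_{i∈S} V_{th,i} : S ⊆ {1,...,N}} equals {k/2^N : k = 0, 1, ..., 2^N − 1}. Then V_{th,i} = 2^{-i} for every i; equivalently V_{th,i+1} = V_{th,i}/2 for all i < N and V_{th,N} = 2^{-N}. -/
/-- Geometric sum helper: `∑_{n ∈ [a,b)} (1/2)^(n+1) = (1/2)^a - (1/2)^b`. -/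
lemma dyadic_geom_sum {a b : ℕ} (hab : a ≤ b) :
    ∑ n ∈ Finset.Ico a b, ((1:ℝ)/2) ^ (n+1) = (1/2)^a - (1/2)^b := by
  induction b, hab using Nat.le_induction with
  | base => simp
  | succ b hab ih =>
    rw [Finset.sum_Ico_succ_top hab, ih]
    ring

/-- Let `N ≥ 1` and let `Vth 0 > Vth 1 > ... > Vth (N-1) > 0` be real
thresholds (zero-based indexing) such that the set of subset sums
`{Σ_{i∈S} Vth i : S ⊆ {0,...,N-1}}` equals `{k/2^N : k = 0, 1, ..., 2^N − 1}`.
Then `Vth i = 2^{-(i+1)}` for every `i`; equivalently `Vth (i+1) = Vth i / 2`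
for all `i < N - 1` and `Vth (N-1) = 2^{-N}`. -/
theorem dyadic_thresholds_of_subset_sums (N : ℕ) (hN : 1 ≤ N)
    (Vth : Fin N → ℝ) (hanti : StrictAnti Vth) (hpos : ∀ i, 0 < Vth i)
    (hsums : Set.range (fun S : Finset (Fin N) => ∑ i ∈ S, Vth i)
      = {x : ℝ | ∃ k : ℕ, k < 2 ^ N ∧ x = (k : ℝ) / 2 ^ N}) :
    ∀ i : Fin N, Vth i = (1 / 2) ^ ((i : ℕ) + 1) := by
  have h2N : (0:ℝ) < 2 ^ N := by positivity
  -- membership in both directions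
  have hmem : ∀ k : ℕ, k < 2 ^ N → ∃ S : Finset (Fin N),
      ∑ i ∈ S, Vth i = (k : ℝ) / 2 ^ N := by
    intro k hk
    have : ((k : ℝ) / 2 ^ N) ∈ Set.range (fun S : Finset (Fin N) => ∑ i ∈ S, Vth i) := by
      rw [hsums]; exact ⟨k, hk, rfl⟩
    obtain ⟨S, hS⟩ := this
    exact ⟨S, hS⟩
  have hval : ∀ S : Finset (Fin N), ∃ k : ℕ, k < 2 ^ N ∧
      ∑ i ∈ S, Vth i = (k : ℝ) / 2 ^ N := by
    intro S
    have : (∑ i ∈ S, Vth i) ∈ Set.range (fun S : Finset (Fin N) => ∑ i ∈ S, Vth i) :=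
      ⟨S, rfl⟩
    rw [hsums] at this
    exact this
  -- the subset-sum map is injective
  have hinj : Function.Injective (fun S : Finset (Fin N) => ∑ i ∈ S, Vth i) := by
    set f : Finset (Fin N) → ℝ := fun S => ∑ i ∈ S, Vth i with hf
    have hco : (Finset.univ.image f : Set ℝ)
        = ((Finset.range (2^N)).image (fun k : ℕ => (k : ℝ) / 2 ^ N) : Set ℝ) := by
      rw [Finset.coe_image, Finset.coe_image, Finset.coe_univ, Set.image_univ, hsums]
      ext x
      simp only [Finset.coe_range, Set.mem_image, Set.mem_Iio, Set.mem_setOf_eq]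
      constructor
      · rintro ⟨k, hk, rfl⟩; exact ⟨k, hk, rfl⟩
      · rintro ⟨k, hk, rfl⟩; exact ⟨k, hk, rfl⟩
    have heq : Finset.univ.image f
        = (Finset.range (2^N)).image (fun k : ℕ => (k : ℝ) / 2 ^ N) :=
      Finset.coe_injective hco
    have hcard2 : ((Finset.range (2^N)).image (fun k : ℕ => (k : ℝ) / 2 ^ N)).card
        = 2 ^ N := by
      have hdivinj : Function.Injective (fun k : ℕ => (k : ℝ) / 2 ^ N) := by
        intro a b hab
        field_simp at hab
        exact_mod_cast hab
      rw [Finset.card_image_of_injective _ hdivinj, Finset.card_range]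
    have hcard : (Finset.univ.image f).card
        = (Finset.univ : Finset (Finset (Fin N))).card := by
      rw [heq, hcard2, Finset.card_univ, Fintype.card_finset, Fintype.card_fin]
    have := (Finset.card_image_iff).mp hcard
    intro S T hST
    exact this (Finset.mem_univ S) (Finset.mem_univ T) hST
  -- the key inductive step
  have step : ∀ i : Fin N, (∀ j : Fin N, i < j → Vth j = (1/2) ^ ((j:ℕ)+1)) →
      Vth i = (1/2) ^ ((i:ℕ)+1) := by
    intro i hj
    set a : ℕ := N - ((i:ℕ) + 1) with ha'
    have hiN : (i:ℕ) < N := i.isLt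
    have ha : (i:ℕ) + 1 + a = N := by omega
    -- the tail sum
    have hT : ∑ j ∈ Finset.Ioi i, Vth j = (1/2)^((i:ℕ)+1) - (1/2)^N := by
      have h1 : ∑ j ∈ Finset.Ioi i, Vth j
          = ∑ j ∈ Finset.Ioi i, (1/2:ℝ)^((j:ℕ)+1) := by
        refine Finset.sum_congr rfl (fun j hjm => ?_)
        exact hj j (Finset.mem_Ioi.mp hjm)
      have h2 : ∑ j ∈ Finset.Ioi i, (1/2:ℝ)^((j:ℕ)+1)
          = ∑ n ∈ Finset.Ioc (i:ℕ) (N-1), (1/2:ℝ)^(n+1) := by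
        rw [show Finset.Ioc (i:ℕ) (N-1) = Finset.Ioo (i:ℕ) N by
          ext n; simp only [Finset.mem_Ioc, Finset.mem_Ioo]; omega]
        rw [← Fin.map_valEmbedding_Ioi, Finset.sum_map]
        rfl
      have h3 : Finset.Ioc (i:ℕ) (N-1) = Finset.Ico ((i:ℕ)+1) N := by
        ext n
        simp only [Finset.mem_Ioc, Finset.mem_Ico]
        omega
      rw [h1, h2, h3, dyadic_geom_sum (by omega)]
    have hTval : ∑ j ∈ Finset.Ioi i, Vth j = ((2:ℝ)^a - 1) / 2^N := by
      rw [hT]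
      have h2 : (2:ℝ)^N = 2^((i:ℕ)+1) * 2^a := by rw [← pow_add, ha]
      rw [eq_div_iff h2N.ne', sub_mul, ← mul_pow, h2, ← mul_assoc, ← mul_pow]; norm_num
    have hv : ((2:ℝ)^a) / 2^N = (1/2)^((i:ℕ)+1) := by
      have : (2:ℝ)^N = 2^((i:ℕ)+1) * 2^a := by rw [← pow_add, ha]
      rw [this, mul_comm, ← div_div, div_self (by positivity), one_div_pow]
    -- Step A: Vth i ≤ 2^a / 2^N
    have hA : Vth i ≤ (2:ℝ)^a / 2^N := by
      obtain ⟨S, hS⟩ := hmem (2^a) (by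
        have : a < N := by omega
        exact Nat.pow_lt_pow_right (by norm_num) this)
      push_cast at hS
      by_cases hsub : ∀ j ∈ S, i < j
      · exfalso
        have hSsub : S ⊆ Finset.Ioi i := fun j hjS => Finset.mem_Ioi.mpr (hsub j hjS)
        have hle : ∑ j ∈ S, Vth j ≤ ∑ j ∈ Finset.Ioi i, Vth j :=
          Finset.sum_le_sum_of_subset_of_nonneg hSsub (fun j _ _ => (hpos j).le)
        rw [hS, hTval] at hle
        have := (div_le_div_iff_of_pos_right h2N).mp hle
        linarith
      · push_neg at hsub
        obtain ⟨j, hjS, hji⟩ := hsub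
        have h1 : Vth i ≤ Vth j := hanti.antitone hji
        have h2 : Vth j ≤ ∑ j ∈ S, Vth j :=
          Finset.single_le_sum (fun k _ => (hpos k).le) hjS
        rw [hS] at h2
        linarith
    -- Step B: Vth i ≥ 2^a / 2^N
    have hB : (2:ℝ)^a / 2^N ≤ Vth i := by
      obtain ⟨k, hk, hVik⟩ := hval {i}
      rw [Finset.sum_singleton] at hVik
      by_contra hlt
      push_neg at hlt
      -- then k ≤ 2^a - 1, so Vth i ≤ (2^a - 1)/2^N
      have hkr : (k:ℝ) < (2:ℝ)^a := by
        rw [hVik] at hlt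
        have := (div_lt_div_iff_of_pos_right h2N).mp hlt
        exact this
      have hk2 : k < 2^a := by exact_mod_cast hkr
      have hVile : Vth i ≤ ((2:ℝ)^a - 1) / 2^N := by
        rw [hVik]
        have : (k:ℝ) ≤ (2:ℝ)^a - 1 := by
          have h1 : ((k:ℕ):ℝ) + 1 ≤ ((2^a : ℕ):ℝ) := by exact_mod_cast Nat.succ_le_of_lt hk2
          push_cast at h1
          linarith
        gcongr
      -- every subset of Ici i has a sum k_S/2^N with k_S ≤ 2^(a+1) - 2
      have hbound : ∀ S ∈ (Finset.Ici i).powerset,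
          ∃ kS : ℕ, kS < 2^(a+1) - 1 ∧ ∑ j ∈ S, Vth j = (kS : ℝ) / 2^N := by
        intro S hS
        obtain ⟨kS, hkS, hkSval⟩ := hval S
        refine ⟨kS, ?_, hkSval⟩
        have hSsub : S ⊆ Finset.Ici i := Finset.mem_powerset.mp hS
        have hsumle : ∑ j ∈ S, Vth j ≤ ∑ j ∈ Finset.Ici i, Vth j :=
          Finset.sum_le_sum_of_subset_of_nonneg hSsub (fun j _ _ => (hpos j).le)
        have hIci : ∑ j ∈ Finset.Ici i, Vth j = Vth i + ∑ j ∈ Finset.Ioi i, Vth j := by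
          rw [Finset.Ici_eq_cons_Ioi, Finset.sum_cons]
        have : (kS:ℝ)/2^N ≤ ((2:ℝ)^a - 1)/2^N + ((2:ℝ)^a - 1)/2^N := by
          rw [← hkSval]
          rw [hIci, hTval] at hsumle
          linarith
        have hkSr : (kS:ℝ) ≤ 2 * (2:ℝ)^a - 2 := by
          rw [← add_div, div_le_div_iff_of_pos_right h2N] at this
          linarith
        have : (kS:ℝ) < (2:ℝ)^(a+1) - 1 := by
          rw [pow_succ]
          linarith
        have h2a1 : 1 ≤ 2^(a+1) := Nat.one_le_two_pow
        have : (kS:ℝ) < ((2^(a+1) - 1 : ℕ) : ℝ) := by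
          push_cast [h2a1]
          linarith [this]
        exact_mod_cast this
      -- injective map from the powerset into range (2^(a+1)-1)
      have hcardle : (Finset.Ici i).powerset.card ≤ (Finset.range (2^(a+1) - 1)).card := by
        apply Finset.card_le_card_of_injOn
          (fun S => if h : S ∈ (Finset.Ici i).powerset then (hbound S h).choose else 0)
        · intro S hS
          simp only [Finset.mem_coe] at hS
          simp only [hS, dif_pos, Finset.mem_coe, Finset.mem_range]
          exact (hbound S hS).choose_spec.1
        · intro S hS T hT hSTeq
          simp only [Finset.mem_coe] at hS hT
          simp only [hS, hT, dif_pos] at hSTeq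
          have h1 := (hbound S hS).choose_spec.2
          have h2 := (hbound T hT).choose_spec.2
          apply hinj
          show ∑ j ∈ S, Vth j = ∑ j ∈ T, Vth j
          rw [h1, h2, hSTeq]
      rw [Finset.card_powerset, Fin.card_Ici, Finset.card_range] at hcardle
      have hNi : N - (i:ℕ) = a + 1 := by omega
      rw [hNi] at hcardle
      omega
    have := le_antisymm hA hB
    rw [← hv, this]
  -- finish by downward induction
  have main : ∀ m : ℕ, ∀ i : Fin N, N ≤ (i:ℕ) + 1 + m → Vth i = (1/2) ^ ((i:ℕ)+1) := by
    intro m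
    induction m with
    | zero =>
      intro i h
      apply step
      intro j hij
      exfalso
      have := j.isLt
      have : (i:ℕ) < (j:ℕ) := hij
      omega
    | succ m ih =>
      intro i h
      apply step
      intro j hij
      apply ih
      have : (i:ℕ) < (j:ℕ) := hij
      omega
  intro i
  exact main N i (by omega)
end

section
/- Let N ≥ 1 and let V_{th,1} > V_{th,2} > ... > V_{th,N} > 0 be real thresholds with Σ_{i=1}^N V_{th,i} ≤ 1. Let S ⊆ [0,1] be the (finite, nonempty, containing 0) set of subset sums of the thresholds, and for V ∈ [0,1] let g(V) = sup{s ∈ S : s ≤ V}. Then ∫_0^1 (V − g(V)) dV ≥ 1/2^{N+1}. -/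
/-- Let `N ≥ 1` and let `Vth 0 > Vth 1 > ... > Vth (N-1) > 0` be real
thresholds (zero-based indexing) with `Σ_i Vth i ≤ 1`. Let `S ⊆ [0,1]` be the
(finite, nonempty, containing `0`) set of subset sums of the thresholds, and
for `V ∈ [0,1]` let `g(V) = sup {s ∈ S : s ≤ V}`.
Then `∫_0^1 (V − g(V)) dV ≥ 1/2^(N+1)`. -/
theorem expected_error_ge (N : ℕ) (hN : 1 ≤ N)
    (Vth : Fin N → ℝ) (hanti : StrictAnti Vth) (hpos : ∀ i, 0 < Vth i)
    (hsum : ∑ i, Vth i ≤ 1) :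
    (1 : ℝ) / 2 ^ (N + 1) ≤
      ∫ V in (0 : ℝ)..1,
        (V - sSup {s : ℝ | (∃ T : Finset (Fin N), s = ∑ i ∈ T, Vth i) ∧ s ≤ V}) := by
  classical
  set F : Finset ℝ :=
    Finset.image (fun T : Finset (Fin N) => ∑ i ∈ T, Vth i) Finset.univ with hFdef
  have hmemF : ∀ s : ℝ, s ∈ F ↔ ∃ T : Finset (Fin N), s = ∑ i ∈ T, Vth i := by
    intro s
    simp [hFdef, eq_comm]
  have h0F : (0 : ℝ) ∈ F := (hmemF 0).2 ⟨∅, by simp⟩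
  have hFnonneg : ∀ s ∈ F, (0 : ℝ) ≤ s := by
    intro s hs
    obtain ⟨T, rfl⟩ := (hmemF s).1 hs
    exact Finset.sum_nonneg fun i _ => (hpos i).le
  have hFle1 : ∀ s ∈ F, s ≤ 1 := by
    intro s hs
    obtain ⟨T, rfl⟩ := (hmemF s).1 hs
    calc ∑ i ∈ T, Vth i ≤ ∑ i, Vth i :=
          Finset.sum_le_sum_of_subset_of_nonneg (Finset.subset_univ T)
            (fun i _ _ => (hpos i).le)
      _ ≤ 1 := hsum
  set g : ℝ → ℝ := fun V =>
    sSup {s : ℝ | (∃ T : Finset (Fin N), s = ∑ i ∈ T, Vth i) ∧ s ≤ V} with hgdef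
  have hset : ∀ V : ℝ,
      {s : ℝ | (∃ T : Finset (Fin N), s = ∑ i ∈ T, Vth i) ∧ s ≤ V}
        = {s : ℝ | s ∈ F ∧ s ≤ V} := by
    intro V; ext s; simp [hmemF]
  have hsub : ∀ V : ℝ, {s : ℝ | s ∈ F ∧ s ≤ V} ⊆ (F : Set ℝ) := fun V s hs => hs.1
  have hbdd : ∀ V : ℝ, BddAbove {s : ℝ | s ∈ F ∧ s ≤ V} := fun V =>
    (F.finite_toSet.subset (hsub V)).bddAbove
  have hgmono : Monotone g := by
    intro V₁ V₂ h
    simp only [hgdef, hset]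
    rcases Set.eq_empty_or_nonempty {s : ℝ | s ∈ F ∧ s ≤ V₁} with he | hne
    · rw [he, Real.sSup_empty]
      exact Real.sSup_nonneg fun s hs => hFnonneg s hs.1
    · exact csSup_le_csSup (hbdd V₂) hne fun s hs => ⟨hs.1, hs.2.trans h⟩
  -- enumeration of F
  set K : ℕ := F.card with hKdef
  have hK0 : 0 < K := Finset.card_pos.2 ⟨0, h0F⟩
  have hKle : K ≤ 2 ^ N := by
    calc K ≤ (Finset.univ : Finset (Finset (Fin N))).card := Finset.card_image_le
      _ = 2 ^ N := by simp [Finset.card_univ]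
  set e : Fin K ≃o {x // x ∈ F} := F.orderIsoOfFin rfl with hedef
  set p : ℕ → ℝ := fun j => if h : j < K then (e ⟨j, h⟩ : ℝ) else 1 with hpdef
  have hpF : ∀ j (h : j < K), p j ∈ F := by
    intro j h; simp only [hpdef, dif_pos h]; exact (e ⟨j, h⟩).2
  have hpmono : ∀ j, j < K → p j ≤ p (j + 1) := by
    intro j hj
    by_cases h : j + 1 < K
    · simp only [hpdef, dif_pos hj, dif_pos h]
      exact_mod_cast Subtype.coe_le_coe.2 (e.le_iff_le.2 (by simp [Fin.le_def]))
    · simp only [hpdef, dif_pos hj, dif_neg h]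
      exact hFle1 _ (e ⟨j, hj⟩).2
  have hp0 : p 0 = 0 := by
    obtain ⟨i, hi⟩ := e.surjective ⟨0, h0F⟩
    have h1 : p 0 ≤ 0 := by
      simp only [hpdef, dif_pos hK0]
      have : e ⟨0, hK0⟩ ≤ e i := e.le_iff_le.2 (by simp [Fin.le_def])
      calc (e ⟨0, hK0⟩ : ℝ) ≤ (e i : ℝ) := Subtype.coe_le_coe.2 this
        _ = 0 := by rw [hi]
    exact le_antisymm h1 (hFnonneg _ (hpF 0 hK0))
  have hpK : p K = 1 := by simp [hpdef]
  -- on each open interval, g is constant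
  have hgconst : ∀ j, j < K → ∀ V ∈ Set.Ioo (p j) (p (j + 1)), g V = p j := by
    intro j hj V hV
    have hmem : p j ∈ {s : ℝ | s ∈ F ∧ s ≤ V} := ⟨hpF j hj, hV.1.le⟩
    have hub : ∀ s ∈ {s : ℝ | s ∈ F ∧ s ≤ V}, s ≤ p j := by
      rintro s ⟨hsF, hsV⟩
      obtain ⟨i, hi⟩ := e.surjective ⟨s, hsF⟩
      by_contra hgt
      push_neg at hgt
      have hpj : p j = ((e ⟨j, hj⟩ : {x // x ∈ F}) : ℝ) := by
        simp only [hpdef, dif_pos hj]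
      have hij : (⟨j, hj⟩ : Fin K) < i := by
        rw [← e.lt_iff_lt, ← Subtype.coe_lt_coe, hi]
        rw [hpj] at hgt
        exact hgt
      have hji : j + 1 ≤ (i : ℕ) := hij
      by_cases hcase : j + 1 < K
      · have : p (j + 1) ≤ s := by
          have h1 : e ⟨j + 1, hcase⟩ ≤ e i := e.le_iff_le.2 (by simpa [Fin.le_def] using hji)
          have := Subtype.coe_le_coe.2 h1
          rw [hi] at this
          simpa only [hpdef, dif_pos hcase] using this
        exact absurd (this.trans hsV) (not_le.2 hV.2)
      · exact absurd (hji.trans_lt i.2) hcase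
    simp only [hgdef, hset]
    exact le_antisymm (csSup_le ⟨_, hmem⟩ hub) (le_csSup (hbdd V) hmem)
  -- integrability
  have hgint : ∀ a b : ℝ, IntervalIntegrable (fun V => V - g V) MeasureTheory.volume a b := by
    intro a b
    exact (continuous_id.intervalIntegrable a b).sub hgmono.intervalIntegrable
  have hsplit : (∫ V in (0:ℝ)..1, (V - g V)) =
      ∑ j ∈ Finset.range K, ∫ V in p j..p (j+1), (V - g V) := by
    rw [intervalIntegral.sum_integral_adjacent_intervals (fun k _ => hgint _ _), hp0, hpK]
  have hterm : ∀ j < K, (∫ V in p j..p (j+1), (V - g V)) = (p (j+1) - p j)^2 / 2 := by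
    intro j hj
    have hle := hpmono j hj
    have h1 : (∫ V in p j..p (j+1), (V - g V)) = ∫ V in p j..p (j+1), (V - p j) := by
      rw [intervalIntegral.integral_of_le hle, intervalIntegral.integral_of_le hle,
        MeasureTheory.integral_Ioc_eq_integral_Ioo, MeasureTheory.integral_Ioc_eq_integral_Ioo]
      exact MeasureTheory.setIntegral_congr_fun measurableSet_Ioo
        (fun V hV => by rw [hgconst j hj V hV])
    rw [h1, intervalIntegral.integral_sub intervalIntegral.intervalIntegrable_id
      intervalIntegrable_const, integral_id, intervalIntegral.integral_const]
    simp only [smul_eq_mul]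
    ring
  have hsum2 : (1:ℝ) ≤ (K:ℝ) * ∑ j ∈ Finset.range K, (p (j+1) - p j)^2 := by
    have h := sq_sum_le_card_mul_sum_sq (s := Finset.range K)
      (f := fun j => p (j+1) - p j)
    simpa [Finset.sum_range_sub p, hp0, hpK] using h
  have hsumsq_nonneg : (0:ℝ) ≤ ∑ j ∈ Finset.range K, (p (j+1) - p j)^2 :=
    Finset.sum_nonneg fun j _ => sq_nonneg _
  have hA : (1:ℝ)/(2^N) ≤ ∑ j ∈ Finset.range K, (p (j+1) - p j)^2 := by
    rw [div_le_iff₀ (by positivity)]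
    calc (1:ℝ) ≤ (K:ℝ) * ∑ j ∈ Finset.range K, (p (j+1) - p j)^2 := hsum2
      _ ≤ (2^N : ℝ) * ∑ j ∈ Finset.range K, (p (j+1) - p j)^2 := by
          apply mul_le_mul_of_nonneg_right _ hsumsq_nonneg
          exact_mod_cast hKle
      _ = (∑ j ∈ Finset.range K, (p (j+1) - p j)^2) * 2^N := by ring
  rw [hsplit, Finset.sum_congr rfl (fun j hj => hterm j (Finset.mem_range.1 hj))]
  rw [← Finset.sum_div]
  rw [pow_succ, ← div_div]
  linarith
end

section
/- Let N ≥ 1 and let V_{th,1} > V_{th,2} > ... > V_{th,N} > 0 be real thresholds with Σ_{i=1}^N V_{th,i} ≤ 1. Let S be the set of subset sums of the thresholds and g(V) = sup{s ∈ S : s ≤ V} for V ∈ [0,1]. Then ∫_0^1 (V − g(V)) dV = 1/2^{N+1} if and only if V_{th,i} = 2^{-i} for every i. -/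
open MeasureTheory intervalIntegral Finset Set


noncomputable def gS (A : Finset ℝ) (V : ℝ) : ℝ := sSup ↑(A.filter (fun x => x ≤ V))

lemma gS_eq {A : Finset ℝ} {a V : ℝ} (ha : a ∈ A) (haV : a ≤ V)
    (hmax : ∀ x ∈ A, x ≤ V → x ≤ a) : gS A V = a := by
  have hne : (A.filter (fun x => x ≤ V)).Nonempty := ⟨a, by simp [Finset.mem_filter, ha, haV]⟩
  rw [gS, hne.csSup_eq_max']
  apply le_antisymm
  · exact Finset.max'_le _ _ _ (fun x hx => by
      rw [Finset.mem_filter] at hx; exact hmax x hx.1 hx.2)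
  · exact Finset.le_max' _ a (by simp [Finset.mem_filter, ha, haV])

lemma gS_erase {A : Finset ℝ} {m V : ℝ} (hV : V < m) : gS A V = gS (A.erase m) V := by
  have : A.filter (fun x => x ≤ V) = (A.erase m).filter (fun x => x ≤ V) := by
    ext x
    simp only [Finset.mem_filter, Finset.mem_erase]
    constructor
    · rintro ⟨hx, hxV⟩; exact ⟨⟨fun h => absurd hxV (by rw [h]; exact not_le.2 hV), hx⟩, hxV⟩
    · rintro ⟨⟨_, hx⟩, hxV⟩; exact ⟨hx, hxV⟩
  rw [gS, gS, this]

lemma intervalIntegrable_congr_of_eqOn {f g : ℝ → ℝ} {a b : ℝ} (h : Set.EqOn f g (Set.uIcc a b))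
    (hg : IntervalIntegrable g volume a b) : IntervalIntegrable f volume a b := by
  rw [intervalIntegrable_iff] at hg ⊢
  exact (hg.congr_fun (fun x hx => (h (Set.uIoc_subset_uIcc hx)).symm) measurableSet_uIoc)

lemma sum_two_pow (k : ℕ) : ∑ a ∈ Finset.range k, 2 ^ a = 2 ^ k - 1 := by
  induction k with
  | zero => simp
  | succ k ih =>
    rw [Finset.sum_range_succ, ih, pow_succ]
    have : 1 ≤ 2 ^ k := Nat.one_le_two_pow
    omega

lemma bin_rep (k : ℕ) : ∀ j < 2 ^ k, ∃ s ⊆ Finset.range k, ∑ a ∈ s, 2 ^ a = j := by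
  induction k with
  | zero => intro j hj; interval_cases j; exact ⟨∅, by simp⟩
  | succ k ih =>
    intro j hj
    by_cases h : j < 2 ^ k
    · obtain ⟨s, hs, hsum⟩ := ih j h
      exact ⟨s, hs.trans (Finset.range_subset_range.2 (Nat.le_succ k)), hsum⟩
    · push_neg at h
      obtain ⟨s, hs, hsum⟩ := ih (j - 2 ^ k) (by rw [pow_succ] at hj; omega)
      refine ⟨insert k s, ?_, ?_⟩
      · intro x hx
        rcases Finset.mem_insert.1 hx with h' | hx
        · simp [h']
        · exact Finset.range_subset_range.2 (Nat.le_succ k) (hs hx)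
      · rw [Finset.sum_insert (fun hk => absurd (hs hk) (by simp)), hsum]
        omega

lemma mainE : ∀ (n : ℕ) (A : Finset ℝ), A.card = n → (0:ℝ) ∈ A →
    ∀ u : ℝ, (∀ x ∈ A, 0 ≤ x) → (∀ x ∈ A, x ≤ u) →
    IntervalIntegrable (fun V => V - gS A V) volume 0 u ∧
    u ^ 2 / (2 * n) ≤ (∫ V in (0:ℝ)..u, (V - gS A V)) ∧
    ((∫ V in (0:ℝ)..u, (V - gS A V)) = u ^ 2 / (2 * n) ↔
      A = (Finset.range n).image (fun j : ℕ => (j : ℝ) * u / n)) := by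
  intro n
  induction n using Nat.strong_induction_on with
  | _ n IH =>
  intro A hcard h0 u hnn hle
  have hu0 : 0 ≤ u := hle 0 h0
  have hnpos : 0 < n := hcard ▸ Finset.card_pos.2 ⟨0, h0⟩
  rcases eq_or_lt_of_le (show 1 ≤ n from hnpos) with h1 | h2
  · -- n = 1
    have hn1 : n = 1 := h1.symm
    subst hn1
    obtain ⟨a, ha⟩ := Finset.card_eq_one.1 hcard
    have ha0 : a = 0 := by
      have := h0; rw [ha, Finset.mem_singleton] at this; exact this.symm
    subst ha0
    have heq : Set.EqOn (fun V => V - gS A V) (fun V => V) (Set.uIcc 0 u) := by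
      intro V hV
      rw [Set.uIcc_of_le hu0] at hV
      have : gS A V = 0 := gS_eq h0 hV.1 (fun x hx _ => by
        rw [ha, Finset.mem_singleton] at hx; exact le_of_eq hx)
      simp [this]
    have hint : IntervalIntegrable (fun V => V - gS A V) volume 0 u :=
      intervalIntegrable_congr_of_eqOn heq (continuous_id.intervalIntegrable _ _)
    have hval : (∫ V in (0:ℝ)..u, (V - gS A V)) = u ^ 2 / 2 := by
      rw [intervalIntegral.integral_congr heq, integral_id]; ring
    have himg : (Finset.range 1).image (fun j : ℕ => (j : ℝ) * u / (1:ℕ)) = {0} := by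
      rw [Finset.range_one, Finset.image_singleton]; norm_num
    refine ⟨hint, ?_, ?_⟩
    · rw [hval]; norm_num
    · rw [hval, himg, ha]
      norm_num
  · -- 2 ≤ n
    obtain ⟨k, rfl⟩ : ∃ k, n = k + 1 := ⟨n - 1, by omega⟩
    have hk1 : 1 ≤ k := by omega
    set m := A.max' ⟨0, h0⟩ with hm_def
    have hmA : m ∈ A := Finset.max'_mem _ _
    have hm0 : 0 ≤ m := hnn m hmA
    have hmu : m ≤ u := hle m hmA
    have hmpos : 0 < m := by
      have : ∃ x ∈ A, x ≠ 0 := by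
        obtain ⟨x, hx, y, hy, hxy⟩ := Finset.one_lt_card.1 (by omega : 1 < A.card)
        rcases eq_or_ne x 0 with rfl | hx0
        · exact ⟨y, hy, fun h => hxy (by rw [h])⟩
        · exact ⟨x, hx, hx0⟩
      obtain ⟨x, hx, hx0⟩ := this
      exact lt_of_lt_of_le (lt_of_le_of_ne (hnn x hx) (Ne.symm hx0)) (Finset.le_max' _ x hx)
    set A' := A.erase m with hA'_def
    have h0' : (0:ℝ) ∈ A' := Finset.mem_erase.2 ⟨ne_of_lt hmpos, h0⟩
    have hnn' : ∀ x ∈ A', 0 ≤ x := fun x hx => hnn x (Finset.mem_of_mem_erase hx)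
    have hle' : ∀ x ∈ A', x ≤ m := fun x hx => Finset.le_max' _ x (Finset.mem_of_mem_erase hx)
    obtain ⟨int', hge', hiff'⟩ := IH k (by omega) A'
      (by rw [hA'_def, Finset.card_erase_of_mem hmA, hcard]; omega) h0' m hnn' hle'
    -- pointwise facts
    have hEq1 : Set.EqOn (fun V => V - gS A V) (fun V => V - m) (Set.uIcc m u) := by
      intro V hV
      rw [Set.uIcc_of_le hmu] at hV
      have : gS A V = m := gS_eq hmA hV.1 (fun x hxA _ => Finset.le_max' _ x hxA)
      simp [this]
    have hint2 : IntervalIntegrable (fun V => V - gS A V) volume m u :=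
      intervalIntegrable_congr_of_eqOn hEq1 ((continuous_id.sub continuous_const).intervalIntegrable _ _)
    have hae : ∀ᵐ V ∂(volume : Measure ℝ), V ∈ Set.uIoc 0 m →
        V - gS A V = V - gS A' V := by
      filter_upwards [measure_eq_zero_iff_ae_notMem.mp (measure_singleton m)] with V hVm hV
      rw [Set.uIoc_of_le hm0] at hV
      have hVltm : V < m := lt_of_le_of_ne hV.2 (by simpa using hVm)
      rw [gS_erase hVltm]
    have hint1 : IntervalIntegrable (fun V => V - gS A V) volume 0 m := by
      rw [intervalIntegrable_iff] at int' ⊢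
      refine int'.congr ?_
      exact (ae_restrict_iff' measurableSet_uIoc).2
        (by filter_upwards [hae] with V h hV; exact (h hV).symm)
    have hintTot : IntervalIntegrable (fun V => V - gS A V) volume 0 u := hint1.trans hint2
    have hI1 : (∫ V in (0:ℝ)..m, (V - gS A V)) = ∫ V in (0:ℝ)..m, (V - gS A' V) :=
      intervalIntegral.integral_congr_ae hae
    have hI2 : (∫ V in m..u, (V - gS A V)) = (u - m) ^ 2 / 2 := by
      rw [intervalIntegral.integral_congr hEq1,
        intervalIntegral.integral_sub intervalIntegral.intervalIntegrable_id
          (intervalIntegrable_const), integral_id, intervalIntegral.integral_const]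
      simp only [smul_eq_mul]
      ring
    have hE : (∫ V in (0:ℝ)..u, (V - gS A V)) =
        (∫ V in (0:ℝ)..m, (V - gS A' V)) + (u - m) ^ 2 / 2 := by
      rw [← intervalIntegral.integral_add_adjacent_intervals hint1 hint2, hI1, hI2]
    set E' := ∫ V in (0:ℝ)..m, (V - gS A' V) with hE'_def
    have hkR : (1:ℝ) ≤ (k:ℝ) := by exact_mod_cast hk1
    have hkne : (k:ℝ) ≠ 0 := by linarith
    have hk1ne : (k:ℝ) + 1 ≠ 0 := by linarith
    have key : E' + (u - m) ^ 2 / 2 - u ^ 2 / (2 * ((k:ℝ) + 1)) =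
        (E' - m ^ 2 / (2 * (k:ℝ))) +
          (((k:ℝ) + 1) / (2 * (k:ℝ))) * (m - (k:ℝ) * u / ((k:ℝ) + 1)) ^ 2 := by
      field_simp
      ring
    have hcast : ((k + 1 : ℕ) : ℝ) = (k:ℝ) + 1 := by push_cast; ring
    have hd2nn : 0 ≤ (((k:ℝ) + 1) / (2 * (k:ℝ))) * (m - (k:ℝ) * u / ((k:ℝ) + 1)) ^ 2 := by
      positivity
    have hge1 : E' - m ^ 2 / (2 * (k:ℝ)) ≥ 0 := by
      have := hge'; linarith
    refine ⟨hintTot, ?_, ?_⟩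
    · rw [hE, hcast]
      nlinarith [key, hd2nn, hge1]
    · rw [hE, hcast]
      constructor
      · intro heq
        have hzero : (E' - m ^ 2 / (2 * (k:ℝ))) +
            (((k:ℝ) + 1) / (2 * (k:ℝ))) * (m - (k:ℝ) * u / ((k:ℝ) + 1)) ^ 2 = 0 := by
          rw [← key]; linarith
        obtain ⟨hz1, hz2⟩ := (add_eq_zero_iff_of_nonneg hge1 hd2nn).1 hzero
        have hdzero : m - (k:ℝ) * u / ((k:ℝ) + 1) = 0 := by
          have h2' : (m - (k:ℝ) * u / ((k:ℝ) + 1)) ^ 2 = 0 := by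
            rcases mul_eq_zero.1 hz2 with h | h
            · exfalso
              have hcpos : 0 < ((k:ℝ) + 1) / (2 * (k:ℝ)) := by positivity
              linarith
            · exact h
          exact pow_eq_zero_iff (by norm_num) |>.1 h2'
        have hmval : m = (k:ℝ) * u / ((k:ℝ) + 1) := by linarith
        have hA'img : A' = (Finset.range k).image (fun j : ℕ => (j : ℝ) * m / (k:ℝ)) :=
          hiff'.1 (by linarith)
        have hA : A = insert m A' := (Finset.insert_erase hmA).symm
        rw [hA, hA'img, Finset.range_add_one, Finset.image_insert, hmval]
        congr 1
        apply Finset.image_congr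
        intro j hj
        simp only
        field_simp
      · intro hAimg
        have hupos : 0 < u := by
          rcases lt_or_eq_of_le hu0 with h | h
          · exact h
          · exfalso
            have hsub : A ⊆ {0} := by
              intro x hx
              have h1 := hnn x hx
              have h2 := hle x hx
              rw [Finset.mem_singleton]
              linarith
            have := Finset.card_le_card hsub
            rw [hcard, Finset.card_singleton] at this
            omega
        have hfkA : ((k:ℝ) * u / ((k:ℝ) + 1)) ∈ A := by
          rw [hAimg]
          exact Finset.mem_image.2 ⟨k, Finset.self_mem_range_succ k, rfl⟩
        have hmval : m = (k:ℝ) * u / ((k:ℝ) + 1) := by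
          apply le_antisymm
          · obtain ⟨j, hj, hfj⟩ := Finset.mem_image.1 (hAimg ▸ hmA)
            rw [Finset.mem_range] at hj
            rw [← hfj]
            gcongr
            exact_mod_cast Nat.lt_succ_iff.1 hj
          · exact Finset.le_max' _ _ hfkA
        have finj : ∀ j1 j2 : ℕ, (j1:ℝ) * u / ((k:ℝ) + 1) = (j2:ℝ) * u / ((k:ℝ) + 1) → j1 = j2 := by
          intro j1 j2 h
          have : (j1:ℝ) = j2 := by
            field_simp at h
            linarith
          exact_mod_cast this
        have hA'img : A' = (Finset.range k).image (fun j : ℕ => (j : ℝ) * u / ((k:ℝ) + 1)) := by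
          ext x
          rw [hA'_def, Finset.mem_erase, hAimg]
          simp only [Finset.mem_image, Finset.mem_range]
          constructor
          · rintro ⟨hxm, j, hj, rfl⟩
            refine ⟨j, ?_, rfl⟩
            rcases Nat.lt_succ_iff_lt_or_eq.1 hj with h | rfl
            · exact h
            · exact absurd hmval.symm hxm
          · rintro ⟨j, hj, rfl⟩
            refine ⟨?_, j, by omega, rfl⟩
            rw [hmval]
            intro hcontra
            have := finj j k hcontra
            omega
        have hE'val : E' = m ^ 2 / (2 * (k:ℝ)) := by
          apply hiff'.2
          rw [hA'img]
          apply Finset.image_congr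
          intro j hj
          simp only
          rw [hmval]
          field_simp
        have hdzero : m - (k:ℝ) * u / ((k:ℝ) + 1) = 0 := by rw [hmval]; ring
        have := key
        rw [hdzero] at this
        simp at this
        linarith

lemma pow_helper (N : ℕ) (i : ℕ) (hi : i < N) :
    (2:ℝ) ^ (N - 1 - i) / 2 ^ N = (1/2 : ℝ) ^ (i + 1) := by
  have hN : (N - 1 - i) + (i + 1) = N := by omega
  have h2 : (2:ℝ) ^ N = 2 ^ (N - 1 - i) * 2 ^ (i + 1) := by rw [← pow_add, hN]
  rw [h2, div_pow, one_pow, div_eq_div_iff (by positivity) (by positivity)]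
  ring

/-- Let `N ≥ 1` and let `Vth 0 > Vth 1 > ... > Vth (N-1) > 0` be real
thresholds (zero-based indexing) with `Σ_i Vth i ≤ 1`. Let `S` be the set of
subset sums of the thresholds and `g(V) = sup {s ∈ S : s ≤ V}` for `V ∈ [0,1]`.
Then `∫_0^1 (V − g(V)) dV = 1/2^(N+1)` if and only if `Vth i = 2^{-(i+1)}`
for every `i`. -/
theorem expected_error_eq_iff_dyadic (N : ℕ) (hN : 1 ≤ N)
    (Vth : Fin N → ℝ) (hanti : StrictAnti Vth) (hpos : ∀ i, 0 < Vth i)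
    (hsum : ∑ i, Vth i ≤ 1) :
    (∫ V in (0 : ℝ)..1,
        (V - sSup {s : ℝ | (∃ T : Finset (Fin N), s = ∑ i ∈ T, Vth i) ∧ s ≤ V}))
      = 1 / 2 ^ (N + 1) ↔
    ∀ i : Fin N, Vth i = (1 / 2) ^ ((i : ℕ) + 1) := by
  classical
  set A : Finset ℝ :=
    (Finset.univ.powerset : Finset (Finset (Fin N))).image (fun T => ∑ i ∈ T, Vth i)
    with hA_def
  have hmemA : ∀ s : ℝ, s ∈ A ↔ ∃ T : Finset (Fin N), s = ∑ i ∈ T, Vth i := by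
    intro s
    simp only [hA_def, Finset.mem_image, Finset.mem_powerset]
    constructor
    · rintro ⟨T, _, rfl⟩; exact ⟨T, rfl⟩
    · rintro ⟨T, rfl⟩; exact ⟨T, Finset.subset_univ T, rfl⟩
  have h0A : (0:ℝ) ∈ A := (hmemA 0).2 ⟨∅, by simp⟩
  have hnnA : ∀ x ∈ A, 0 ≤ x := by
    intro x hx; obtain ⟨T, rfl⟩ := (hmemA x).1 hx
    exact Finset.sum_nonneg (fun i _ => (hpos i).le)
  have hleA : ∀ x ∈ A, x ≤ 1 := by
    intro x hx; obtain ⟨T, rfl⟩ := (hmemA x).1 hx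
    exact le_trans (Finset.sum_le_sum_of_subset_of_nonneg (Finset.subset_univ T)
      (fun i _ _ => (hpos i).le)) hsum
  have hcardle : A.card ≤ 2 ^ N := by
    calc A.card ≤ (Finset.univ.powerset : Finset (Finset (Fin N))).card :=
          Finset.card_image_le
    _ = 2 ^ N := by rw [Finset.card_powerset]; simp
  have hsetV : ∀ V : ℝ,
      {s : ℝ | (∃ T : Finset (Fin N), s = ∑ i ∈ T, Vth i) ∧ s ≤ V}
        = ↑(A.filter (fun x => x ≤ V)) := by
    intro V; ext s
    constructor
    · rintro ⟨⟨T, rfl⟩, hsV⟩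
      exact Finset.mem_coe.2 (Finset.mem_filter.2 ⟨(hmemA _).2 ⟨T, rfl⟩, hsV⟩)
    · intro h
      have h' := Finset.mem_filter.1 (Finset.mem_coe.1 h)
      exact ⟨(hmemA s).1 h'.1, h'.2⟩
  have hInt : (∫ V in (0:ℝ)..1,
      (V - sSup {s : ℝ | (∃ T : Finset (Fin N), s = ∑ i ∈ T, Vth i) ∧ s ≤ V}))
      = ∫ V in (0:ℝ)..1, (V - gS A V) := by
    apply intervalIntegral.integral_congr
    intro V _
    simp only [gS]
    rw [hsetV V]
  obtain ⟨hint, hge, hiff⟩ := mainE A.card A rfl h0A 1 hnnA hleA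
  have hψ : ∀ a : ℕ, N - 1 - a < N := fun a => by omega
  -- binary representations give subset sums
  have hbin_sum : ∀ (k : ℕ), k ≤ N →
      (∀ a : ℕ, a < k → Vth ⟨N - 1 - a, hψ a⟩ = 2 ^ a / 2 ^ N) →
      ∀ j : ℕ, j < 2 ^ k → ∃ T : Finset (Fin N),
        (∀ i ∈ T, N - k ≤ (i : ℕ)) ∧ ∑ i ∈ T, Vth i = (j : ℝ) / 2 ^ N := by
    intro k hkN hval j hj
    obtain ⟨s, hs, hsum'⟩ := bin_rep k j hj
    refine ⟨s.image (fun a => (⟨N - 1 - a, hψ a⟩ : Fin N)), ?_, ?_⟩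
    · intro i hi
      obtain ⟨a, ha, rfl⟩ := Finset.mem_image.1 hi
      have := Finset.mem_range.1 (hs ha)
      simp only []
      omega
    · rw [Finset.sum_image (by
        intro a ha b hb hab
        have ha' := Finset.mem_range.1 (hs ha)
        have hb' := Finset.mem_range.1 (hs hb)
        have := congrArg Fin.val hab
        simp only [] at this
        omega)]
      rw [Finset.sum_congr rfl (fun a ha => hval a (Finset.mem_range.1 (hs ha))),
        ← Finset.sum_div]
      congr 1
      rw [← hsum']
      push_cast
      ring
  constructor
  · -- forward direction
    intro hE
    rw [hInt] at hE
    have hApos : 0 < A.card := Finset.card_pos.2 ⟨0, h0A⟩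
    have hAposR : (0:ℝ) < (A.card : ℝ) := by exact_mod_cast hApos
    have hcard2 : A.card = 2 ^ N := by
      by_contra hne
      have hlt : A.card < 2 ^ N := lt_of_le_of_ne hcardle hne
      have h1 : (A.card : ℝ) < 2 ^ N := by exact_mod_cast hlt
      have h2 : (1:ℝ) / 2 ^ (N+1) < 1 ^ 2 / (2 * (A.card : ℝ)) := by
        rw [one_pow]
        apply one_div_lt_one_div_of_lt
        · positivity
        · rw [pow_succ]; linarith
      have := hge
      rw [hE] at this
      linarith
    have hcast2 : ((A.card : ℕ) : ℝ) = 2 ^ N := by rw [hcard2]; push_cast; ring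
    have hAimg : A = (Finset.range A.card).image (fun j : ℕ => (j:ℝ) * 1 / (A.card : ℝ)) := by
      apply hiff.1
      rw [hE, hcast2, one_pow, pow_succ]
      ring
    have hAimg' : A = (Finset.range (2^N)).image (fun j : ℕ => (j:ℝ) / 2 ^ N) := by
      rw [hAimg, hcard2]
      apply Finset.image_congr
      intro j hj
      push_cast
      ring
    have hinj : Set.InjOn (fun T : Finset (Fin N) => ∑ i ∈ T, Vth i)
        ↑(Finset.univ.powerset : Finset (Finset (Fin N))) := by
      apply Finset.card_image_iff.1
      rw [← hA_def, hcard2, Finset.card_powerset]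
      simp
    have hgridA : ∀ j : ℕ, j < 2 ^ N → ((j:ℝ) / 2 ^ N) ∈ A := by
      intro j hj; rw [hAimg']
      exact Finset.mem_image.2 ⟨j, Finset.mem_range.2 hj, rfl⟩
    have hAgrid : ∀ x ∈ A, ∃ j : ℕ, j < 2 ^ N ∧ x = (j:ℝ) / 2 ^ N := by
      intro x hx; rw [hAimg'] at hx
      obtain ⟨j, hj, rfl⟩ := Finset.mem_image.1 hx
      exact ⟨j, Finset.mem_range.1 hj, rfl⟩
    have hVal : ∀ k, k < N → Vth ⟨N - 1 - k, hψ k⟩ = 2 ^ k / 2 ^ N := by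
      intro k
      induction k using Nat.strong_induction_on with
      | _ k IHk =>
      intro hkN
      set i0 : Fin N := ⟨N - 1 - k, hψ k⟩ with hi0
      have hup : Vth i0 ≤ (2:ℝ) ^ k / 2 ^ N := by
        have hmem := hgridA (2 ^ k) (Nat.pow_lt_pow_right (by norm_num) hkN)
        obtain ⟨T, hTeq⟩ := (hmemA _).1 hmem
        have hTsum : ∑ i ∈ T, Vth i = (2:ℝ) ^ k / 2 ^ N := by
          rw [← hTeq]; push_cast; ring
        have hexists : ∃ i ∈ T, (i : ℕ) ≤ N - 1 - k := by
          by_contra hcon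
          push_neg at hcon
          have hTval : ∀ i ∈ T, Vth i = (2:ℝ) ^ (N - 1 - (i:ℕ)) / 2 ^ N := by
            intro i hi
            have h1 : N - 1 - k < (i:ℕ) := hcon i hi
            have hiN := i.isLt
            have h2 : N - 1 - (i:ℕ) < k := by omega
            have := IHk (N - 1 - (i:ℕ)) h2 (by omega)
            convert this using 2
            exact Fin.ext (by simp; omega)
          have hnat : ∑ i ∈ T, 2 ^ (N - 1 - (i:ℕ)) ≤ 2 ^ k - 1 := by
            have hsub : T.image (fun i : Fin N => N - 1 - (i:ℕ)) ⊆ Finset.range k := by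
              intro a ha
              obtain ⟨i, hi, rfl⟩ := Finset.mem_image.1 ha
              have := hcon i hi
              have := i.isLt
              exact Finset.mem_range.2 (by omega)
            have hinj2 : ∀ x ∈ T, ∀ y ∈ T, N - 1 - (x:ℕ) = N - 1 - (y:ℕ) → x = y := by
              intro x hx y hy h
              have := x.isLt; have := y.isLt
              exact Fin.ext (by omega)
            calc ∑ i ∈ T, 2 ^ (N - 1 - (i:ℕ))
                = ∑ a ∈ T.image (fun i : Fin N => N - 1 - (i:ℕ)), 2 ^ a :=
                  (Finset.sum_image hinj2).symm
              _ ≤ ∑ a ∈ Finset.range k, 2 ^ a := Finset.sum_le_sum_of_subset hsub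
              _ = 2 ^ k - 1 := sum_two_pow k
          have hnum : (∑ i ∈ T, (2:ℝ) ^ (N - 1 - (i:ℕ))) < (2:ℝ) ^ k := by
            have h1 : ((∑ i ∈ T, 2 ^ (N - 1 - (i:ℕ)) : ℕ) : ℝ) ≤ ((2 ^ k - 1 : ℕ) : ℝ) := by
              exact_mod_cast hnat
            have h2 : ((2 ^ k - 1 : ℕ) : ℝ) < (2:ℝ) ^ k := by
              have : (1:ℕ) ≤ 2 ^ k := Nat.one_le_two_pow
              push_cast [this]
              norm_num
            have h3 : ((∑ i ∈ T, 2 ^ (N - 1 - (i:ℕ)) : ℕ) : ℝ)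
                = ∑ i ∈ T, (2:ℝ) ^ (N - 1 - (i:ℕ)) := by push_cast; ring
            linarith
          have hreal : (∑ i ∈ T, Vth i) < (2:ℝ) ^ k / 2 ^ N := by
            rw [Finset.sum_congr rfl hTval, ← Finset.sum_div]
            exact div_lt_div_of_pos_right hnum (by positivity)
          rw [hTsum] at hreal
          exact lt_irrefl _ hreal
        obtain ⟨i, hiT, hile⟩ := hexists
        have h1 : Vth i0 ≤ Vth i := hanti.antitone (by
          rw [Fin.le_def]; simpa [hi0] using hile)
        have h2 : Vth i ≤ ∑ i ∈ T, Vth i :=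
          Finset.single_le_sum (fun j _ => (hpos j).le) hiT
        rw [hTsum] at h2
        linarith
      obtain ⟨j, hj2N, hjval⟩ := hAgrid (Vth i0) ((hmemA _).2 ⟨{i0}, by simp⟩)
      have hjpos : 0 < j := by
        rcases Nat.eq_zero_or_pos j with rfl | h
        · exfalso
          have h0 : Vth i0 = 0 := by rw [hjval]; simp
          exact absurd h0 (ne_of_gt (hpos i0))
        · exact h
      have hjle : j ≤ 2 ^ k := by
        have h1 := hup
        rw [hjval] at h1
        have h2 : (j:ℝ) ≤ (2:ℝ) ^ k := by
          have hpow2 : (0:ℝ) < 2 ^ N := by positivity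
          exact (div_le_div_iff_of_pos_right hpow2).1 h1
        exact_mod_cast h2
      rcases eq_or_lt_of_le hjle with heqj | hltj
      · rw [hjval, heqj]; push_cast; ring
      · exfalso
        have hIHall : ∀ a : ℕ, a < k → Vth ⟨N - 1 - a, hψ a⟩ = 2 ^ a / 2 ^ N :=
          fun a ha => IHk a ha (by omega)
        obtain ⟨T2, hT2lo, hT2⟩ := hbin_sum k (le_of_lt hkN) hIHall j hltj
        have hsingle : (fun T : Finset (Fin N) => ∑ i ∈ T, Vth i) {i0} = (j:ℝ)/2^N := by
          simp [← hjval]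
        have hTeq : T2 = {i0} := by
          apply hinj (by simp) (by simp)
          rw [hsingle]
          exact hT2
        have : i0 ∈ T2 := by rw [hTeq]; simp
        have := hT2lo i0 this
        simp [hi0] at this
        omega
    intro i
    have hiN := i.isLt
    have := hVal (N - 1 - (i:ℕ)) (by omega)
    have hieq : (⟨N - 1 - (N - 1 - (i:ℕ)), hψ (N - 1 - (i:ℕ))⟩ : Fin N) = i :=
      Fin.ext (by simp; omega)
    rw [hieq] at this
    rw [this, ← pow_helper N (i:ℕ) hiN]
  · -- backward direction
    intro hd
    have hvals : ∀ i : Fin N, Vth i = (2:ℝ) ^ (N - 1 - (i:ℕ)) / 2 ^ N := by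
      intro i
      rw [hd i, ← pow_helper N (i:ℕ) i.isLt]
    have hAimg : A = (Finset.range (2 ^ N)).image (fun j : ℕ => (j:ℝ) / 2 ^ N) := by
      ext x
      constructor
      · intro hx
        obtain ⟨T, rfl⟩ := (hmemA x).1 hx
        refine Finset.mem_image.2 ⟨∑ i ∈ T, 2 ^ (N - 1 - (i:ℕ)), Finset.mem_range.2 ?_, ?_⟩
        · have hle2 : ∑ i ∈ T, 2 ^ (N - 1 - (i:ℕ)) ≤ 2 ^ N - 1 := by
            calc ∑ i ∈ T, 2 ^ (N - 1 - (i:ℕ))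
                ≤ ∑ i : Fin N, 2 ^ (N - 1 - (i:ℕ)) :=
                  Finset.sum_le_sum_of_subset (Finset.subset_univ T)
              _ = ∑ a ∈ Finset.range N, 2 ^ (N - 1 - a) :=
                  Fin.sum_univ_eq_sum_range (fun a => 2 ^ (N - 1 - a)) N
              _ = ∑ a ∈ Finset.range N, 2 ^ a := Finset.sum_range_reflect (fun a => 2 ^ a) N
              _ = 2 ^ N - 1 := sum_two_pow N
          have : (1:ℕ) ≤ 2 ^ N := Nat.one_le_two_pow
          omega
        · rw [Finset.sum_congr rfl (fun i (_ : i ∈ T) => hvals i), ← Finset.sum_div]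
          congr 1
          push_cast
          ring
      · intro hx
        obtain ⟨j, hj, rfl⟩ := Finset.mem_image.1 hx
        have hval' : ∀ a : ℕ, a < N → Vth ⟨N - 1 - a, hψ a⟩ = 2 ^ a / 2 ^ N := by
          intro a ha
          rw [hvals ⟨N - 1 - a, hψ a⟩]
          congr 2
          simp
          omega
        obtain ⟨T, _, hT⟩ := hbin_sum N le_rfl hval' j (Finset.mem_range.1 hj)
        exact (hmemA _).2 ⟨T, hT.symm⟩
    have hcard2 : A.card = 2 ^ N := by
      rw [hAimg, Finset.card_image_of_injOn, Finset.card_range]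
      intro a ha b hb hab
      have hpow2 : ((2:ℝ) ^ N) ≠ 0 := by positivity
      have : (a:ℝ) = b := by
        field_simp at hab
        exact_mod_cast hab
      exact_mod_cast this
    rw [hInt]
    have himg2 : A = (Finset.range A.card).image (fun j : ℕ => (j:ℝ) * 1 / (A.card : ℝ)) := by
      rw [hcard2, hAimg]
      apply Finset.image_congr
      intro j hj
      push_cast
      ring
    have := hiff.2 himg2
    rw [this, hcard2]
    push_cast
    rw [pow_succ]
    ring
end
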